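/- arXiv:1406.2271 — 2 statements merged into one kernel-verified Lean document; each statement's English description precedes it below -/
import Mathlib

section
/- Let G be a finite simple graph on n vertices and S a nonempty proper subset of vertices. Then the smallest eigenvalue λ of the grounded Laplacian L_g(S) satisfies λ ≤ |S|, with equality if and only if every node of S is adjacent to every node of V∖S. -/
open Filter

/-- The Laplacian matrix of a finite simple graph, over `ℝ`. -/
noncomputable def lapR {V : Type*} [Fintype V] [DecidableEq V] (G : SimpleGraph V) :
    Matrix V V ℝ :=
  letI := Classical.decRel G.Adj
  SimpleGraph.lapMatrix ℝ G

/-- The grounded Laplacian: the principal submatrix of the Laplacian obtained by deleting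
the rows and columns indexed by the grounded set `S`. -/
noncomputable def groundedLaplacian {V : Type*} [Fintype V] [DecidableEq V]
    (G : SimpleGraph V) (S : Finset V) :
    Matrix {v : V // v ∉ S} {v : V // v ∉ S} ℝ :=
  (lapR G).submatrix Subtype.val Subtype.val

/-- The number of edges of `G` with exactly one endpoint in `X` (counted once per edge). -/
noncomputable def boundaryCard {V : Type*} [Fintype V] [DecidableEq V]
    (G : SimpleGraph V) (X : Finset V) : ℕ :=
  letI := Classical.decRel G.Adj
  (Finset.univ.filter fun p : V × V => p.1 ∈ X ∧ p.2 ∉ X ∧ G.Adj p.1 p.2).card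

/-- `lam` is the smallest (real) eigenvalue of the matrix `M`. -/
def IsSmallestEigenvalue {m : Type*} [Fintype m] (M : Matrix m m ℝ) (lam : ℝ) : Prop :=
  (∃ x : m → ℝ, x ≠ 0 ∧ M.mulVec x = lam • x) ∧
  ∀ μ : ℝ, (∃ x : m → ℝ, x ≠ 0 ∧ M.mulVec x = μ • x) → lam ≤ μ

/-- The second-smallest root (with multiplicity) of the characteristic polynomial of `M`. -/
noncomputable def secondSmallestEigenvalue {m : Type*} [Fintype m] [DecidableEq m]
    (M : Matrix m m ℝ) : ℝ :=
  (M.charpoly.roots.sort (· ≤ ·)).getD 1 0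

/-- The subgraph induced on the complement of `S`, as a graph on the subtype. -/
def inducedSub {V : Type*} [DecidableEq V] (G : SimpleGraph V) (S : Finset V) :
    SimpleGraph {v : V // v ∉ S} :=
  SimpleGraph.comap Subtype.val G

/-- The degree of vertex `v` in `G`. -/
noncomputable def degOf {V : Type*} [Fintype V] [DecidableEq V] (G : SimpleGraph V) (v : V) : ℕ :=
  letI := Classical.decRel G.Adj
  G.degree v

/-!
Writing `U` for the complement of `S`, the grounded Laplacian is the Laplacian of the induced
graph `G[U]` plus the diagonal matrix recording, for each `u ∈ U`, the number of its neighbours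
in `S`. Testing the all-ones vector in the Rayleigh quotient kills the Laplacian part, so
`λ · |U|` is at most the number of edges between `U` and `S`, which is at most `|S| · |U|`;
equality forces every `u ∈ U` to see all of `S`. Conversely, when `S` and `U` are completely
joined the diagonal part is `|S| · I`, and the Laplacian of `G[U]` is positive semidefinite.
-/

open Finset Matrix

namespace Matrix

variable {m : Type*} [Fintype m] [DecidableEq m] {M : Matrix m m ℝ} {c : ℝ}

lemma PosSemidef.mul_dotProduct_self_le (h : (M - c • 1).PosSemidef) (x : m → ℝ) :
    c * (x ⬝ᵥ x) ≤ x ⬝ᵥ (M *ᵥ x) := by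
  have h := h.dotProduct_mulVec_nonneg x
  rw [star_trivial, sub_mulVec, smul_mulVec, one_mulVec, dotProduct_sub, dotProduct_smul,
    smul_eq_mul] at h
  linarith

lemma PosSemidef.le_of_mulVec_eq_smul (h : (M - c • 1).PosSemidef) {x : m → ℝ} {μ : ℝ}
    (hx : x ≠ 0) (hμ : M *ᵥ x = μ • x) : c ≤ μ := by
  have hle := h.mul_dotProduct_self_le x
  rw [hμ, dotProduct_smul, smul_eq_mul] at hle
  have hpos : 0 < x ⬝ᵥ x :=
    (dotProduct_self_star_nonneg x).lt_of_ne' (mt dotProduct_self_eq_zero.mp hx)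
  exact le_of_mul_le_mul_right hle hpos

lemma IsHermitian.posSemidef_sub_smul_one (hM : M.IsHermitian) (h : IsSmallestEigenvalue M c) :
    (M - c • 1).PosSemidef := by
  have hN : (M - c • 1).IsHermitian := hM.sub (by simp [IsHermitian])
  refine hN.posSemidef_iff_eigenvalues_nonneg.mpr fun i => ?_
  have hv := hN.mulVec_eigenvectorBasis i
  rw [sub_mulVec, smul_mulVec, one_mulVec, sub_eq_iff_eq_add, ← add_smul] at hv
  have hv0 : ⇑(hN.eigenvectorBasis i) ≠ 0 := by
    simpa using hN.eigenvectorBasis.orthonormal.ne_zero i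
  simpa using h.2 _ ⟨_, hv0, hv⟩

end Matrix

section GroundedLaplacian

variable {V : Type*} [Fintype V] [DecidableEq V] (G : SimpleGraph V) [DecidableRel G.Adj]
  (S : Finset V)

instance : DecidableRel (inducedSub G S).Adj := fun u v => inferInstanceAs (Decidable (G.Adj u v))

lemma lapR_eq_lapMatrix : lapR G = G.lapMatrix ℝ := by
  unfold lapR
  congr

lemma isHermitian_groundedLaplacian : (groundedLaplacian G S).IsHermitian := by
  rw [groundedLaplacian, lapR_eq_lapMatrix]
  exact (G.isHermitian_lapMatrix ℝ).submatrix _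

lemma degree_eq_degree_inducedSub_add_card_filter (u : {v : V // v ∉ S}) :
    G.degree u = (inducedSub G S).degree u + #(S.filter (G.Adj u)) := by
  have hsub : (inducedSub G S).neighborFinset u = (G.neighborFinset u).subtype (· ∉ S) := by
    ext v
    rw [SimpleGraph.mem_neighborFinset]
    simp [inducedSub]
  have hS : S.filter (G.Adj u) = (G.neighborFinset u).filter (· ∈ S) := by
    ext v
    simp [and_comm]
  rw [← SimpleGraph.card_neighborFinset_eq_degree, ← SimpleGraph.card_neighborFinset_eq_degree,
    hsub, card_subtype, hS, add_comm, card_filter_add_card_filter_not]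

lemma groundedLaplacian_eq_lapMatrix_add_diagonal :
    groundedLaplacian G S =
      (inducedSub G S).lapMatrix ℝ +
        diagonal fun u : {v : V // v ∉ S} => (#(S.filter (G.Adj u)) : ℝ) := by
  ext u v
  rcases eq_or_ne u v with rfl | huv
  · simp [groundedLaplacian, lapR_eq_lapMatrix, SimpleGraph.lapMatrix, SimpleGraph.degMatrix,
      degree_eq_degree_inducedSub_add_card_filter G S u]
  · have huv' : u.1 ≠ v.1 := Subtype.val_injective.ne huv
    simp [groundedLaplacian, lapR_eq_lapMatrix, SimpleGraph.lapMatrix, SimpleGraph.degMatrix,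
      huv, huv']
    rfl

lemma one_dotProduct_groundedLaplacian_mulVec_one :
    1 ⬝ᵥ (groundedLaplacian G S *ᵥ 1) =
      ∑ u : {v : V // v ∉ S}, (#(S.filter (G.Adj u)) : ℝ) := by
  rw [groundedLaplacian_eq_lapMatrix_add_diagonal, add_mulVec, Pi.one_def,
    SimpleGraph.lapMatrix_mulVec_const_eq_zero]
  simp [dotProduct, mulVec_diagonal]

lemma groundedLaplacian_sub_smul_one_eq_lapMatrix (h : ∀ s ∈ S, ∀ v, v ∉ S → G.Adj s v) :
    groundedLaplacian G S - (#S : ℝ) • 1 = (inducedSub G S).lapMatrix ℝ := by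
  have hcard (u : {v : V // v ∉ S}) : S.filter (G.Adj u) = S :=
    filter_true_of_mem fun s hs => (h s hs u u.2).symm
  simp [groundedLaplacian_eq_lapMatrix_add_diagonal, hcard, smul_one_eq_diagonal]

end GroundedLaplacian

theorem smallest_eigenvalue_upper_bound_card_general {n : ℕ} (G : SimpleGraph (Fin n))
    (S : Finset (Fin n))
    (lam : ℝ) (hlam : IsSmallestEigenvalue (groundedLaplacian G S) lam) :
    lam ≤ (S.card : ℝ) ∧
      (lam = (S.card : ℝ) ↔ ∀ s ∈ S, ∀ v : Fin n, v ∉ S → G.Adj s v) := by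
  classical
  obtain ⟨x, hx0, hx⟩ := hlam.1
  have hU : (0 : ℝ) < #(univ : Finset {v // v ∉ S}) := by
    obtain ⟨u, -⟩ := Function.ne_iff.mp hx0
    exact_mod_cast card_pos.mpr ⟨u, mem_univ u⟩
  have hrayleigh :
      ∑ _u : {v // v ∉ S}, lam ≤ ∑ u : {v // v ∉ S}, (#(S.filter (G.Adj u)) : ℝ) := by
    simpa [one_dotProduct_groundedLaplacian_mulVec_one, mul_comm] using
      ((isHermitian_groundedLaplacian G S).posSemidef_sub_smul_one hlam).mul_dotProduct_self_le 1
  have hd (u : {v // v ∉ S}) : (#(S.filter (G.Adj u)) : ℝ) ≤ #S := mod_cast card_filter_le _ _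
  have hsum := sum_le_sum fun u (_ : u ∈ univ) => hd u
  have hbound : lam ≤ #S := by
    have h := hrayleigh.trans hsum
    simp only [sum_const, nsmul_eq_mul] at h
    exact le_of_mul_le_mul_left h hU
  refine ⟨hbound, fun heq => ?_, fun hcomplete => hbound.antisymm ?_⟩
  · have hd_eq := (sum_eq_sum_iff_of_le fun u _ => hd u).mp (hsum.antisymm (heq ▸ hrayleigh))
    intro s hs v hv
    have hv_full : #(S.filter (G.Adj v)) = #S := mod_cast hd_eq ⟨v, hv⟩ (mem_univ _)
    exact (card_filter_eq_iff.mp hv_full s hs).symm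
  · have hpsd : (groundedLaplacian G S - (#S : ℝ) • 1).PosSemidef := by
      rw [groundedLaplacian_sub_smul_one_eq_lapMatrix G S hcomplete]
      exact (inducedSub G S).posSemidef_lapMatrix ℝ
    exact hpsd.le_of_mulVec_eq_smul hx0 hx

/-- The smallest eigenvalue `lam` of the grounded Laplacian satisfies
`lam ≤ |S|`, with equality if and only if every grounded node is adjacent to every
non-grounded node. -/
theorem smallest_eigenvalue_upper_bound_card {n : ℕ} (G : SimpleGraph (Fin n))
    (S : Finset (Fin n)) (hS : S.Nonempty) (hSp : S ⊂ Finset.univ)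
    (lam : ℝ) (hlam : IsSmallestEigenvalue (groundedLaplacian G S) lam) :
    lam ≤ (S.card : ℝ) ∧
      (lam = (S.card : ℝ) ↔ ∀ s ∈ S, ∀ v : Fin n, v ∉ S → G.Adj s v) :=
  smallest_eigenvalue_upper_bound_card_general G S lam hlam
end

section
/- Let H be a connected finite simple graph on m ≥ 2 vertices with Laplacian matrix L̄ and second-smallest Laplacian eigenvalue λ₂(L̄). Let s be a positive integer, Δ = diag(α₁,…,α_m) with integer entries 0 ≤ α_i ≤ s, and B = Σ_{i=1}^{m} α_i. Let x be a nonnegative eigenvector of L̄ + Δ for its smallest eigenvalue, normalized so its largest component equals 1, and let γ = (1/m)·Σ_{i=1}^m x_i. Then ‖x − γ·1‖₂² ≤ 2·s·B/λ₂(L̄)², where 1 is the all-ones vector. -/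
open Filter

/-!
Write `y = x - γ𝟏`. Since `L̄𝟏 = 0`, the eigen-equation gives `L̄ y = L̄ x = (λ - Δ) x`. As `H` is
connected, `ker L̄` is spanned by `𝟏` and `y ⊥ 𝟏`, so expanding `y` in an eigenbasis of `L̄` gives
`λ₂² ‖y‖² ≤ ‖L̄ y‖² = Σ (λ - αᵢ)² xᵢ²`. The Rayleigh quotient of `L̄ + Δ` at `𝟏` gives
`λ m ≤ B ≤ s m`; together with `αᵢ ≥ 0`, `λ ≥ 0` (as `L̄ + Δ` is positive semidefinite) and
`xᵢ² ≤ 1` this yields `Σ (λ - αᵢ)² xᵢ² ≤ λ² m + s B ≤ 2 s B`.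
-/

open Matrix

namespace Matrix.IsHermitian

variable {n : Type*} [Fintype n] [DecidableEq n] {A : Matrix n n ℝ} (hA : A.IsHermitian)

theorem sum_eigenvectorBasis_dotProduct_mul (y z : n → ℝ) :
    ∑ k, ((hA.eigenvectorBasis k).ofLp ⬝ᵥ y) * ((hA.eigenvectorBasis k).ofLp ⬝ᵥ z) = y ⬝ᵥ z := by
  simpa [EuclideanSpace.inner_eq_star_dotProduct, dotProduct_comm z] using
    hA.eigenvectorBasis.sum_inner_mul_inner (WithLp.toLp 2 y) (WithLp.toLp 2 z)

theorem eigenvectorBasis_dotProduct_mulVec (k : n) (y : n → ℝ) :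
    (hA.eigenvectorBasis k).ofLp ⬝ᵥ (A *ᵥ y) =
      hA.eigenvalues k * ((hA.eigenvectorBasis k).ofLp ⬝ᵥ y) := by
  have hAt : Aᵀ = A := isHermitian_iff_isSymm.mp hA
  rw [dotProduct_mulVec, ← mulVec_transpose, hAt, hA.mulVec_eigenvectorBasis, smul_dotProduct,
    smul_eq_mul]

theorem mul_dotProduct_self_le_dotProduct_mulVec {c : ℝ} (hc : ∀ k, c ≤ hA.eigenvalues k)
    (y : n → ℝ) : c * (y ⬝ᵥ y) ≤ y ⬝ᵥ (A *ᵥ y) := by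
  rw [← hA.sum_eigenvectorBasis_dotProduct_mul, ← hA.sum_eigenvectorBasis_dotProduct_mul,
    Finset.mul_sum]
  refine Finset.sum_le_sum fun k _ => ?_
  rw [hA.eigenvectorBasis_dotProduct_mulVec]
  linarith [mul_le_mul_of_nonneg_right (hc k) (mul_self_nonneg ((hA.eigenvectorBasis k).ofLp ⬝ᵥ y))]

theorem sq_mul_dotProduct_self_le_mulVec_dotProduct_mulVec {c : ℝ} (hc : 0 ≤ c)
    (hμ : ∀ k, hA.eigenvalues k ≠ 0 → c ≤ |hA.eigenvalues k|) {y : n → ℝ}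
    (hy : ∀ z, A *ᵥ z = 0 → z ⬝ᵥ y = 0) : c ^ 2 * (y ⬝ᵥ y) ≤ (A *ᵥ y) ⬝ᵥ (A *ᵥ y) := by
  rw [← hA.sum_eigenvectorBasis_dotProduct_mul, ← hA.sum_eigenvectorBasis_dotProduct_mul,
    Finset.mul_sum]
  refine Finset.sum_le_sum fun k _ => ?_
  simp only [hA.eigenvectorBasis_dotProduct_mulVec]
  by_cases hk : hA.eigenvalues k = 0
  · have hker : A *ᵥ (hA.eigenvectorBasis k).ofLp = 0 := by
      rw [hA.mulVec_eigenvectorBasis, hk, zero_smul]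
    simp [hy _ hker]
  · have hsq : c ^ 2 ≤ hA.eigenvalues k ^ 2 := by
      simpa only [sq_abs] using pow_le_pow_left₀ hc (hμ k hk) 2
    nlinarith [mul_self_nonneg ((hA.eigenvectorBasis k).ofLp ⬝ᵥ y)]

end Matrix.IsHermitian

theorem Matrix.IsHermitian.card_eigenvalues_eq_zero_eq_finrank_ker {𝕜 n : Type*} [RCLike 𝕜]
    [Fintype n] [DecidableEq n] {A : Matrix n n 𝕜} (hA : A.IsHermitian) :
    Fintype.card {i // hA.eigenvalues i = 0} = Module.finrank 𝕜 (LinearMap.ker (toLin' A)) := by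
  have hrank := LinearMap.finrank_range_add_finrank_ker (toLin' A)
  rw [Module.finrank_fintype_fun_eq_card, toLin'_apply', ← rank, hA.rank_eq_card_non_zero_eigs,
    Fintype.card_subtype_compl] at hrank
  have := Fintype.card_subtype_le fun i => hA.eigenvalues i = 0
  rw [toLin'_apply']
  omega

theorem List.getD_one_pos_and_le_of_pairwise {l : List ℝ} (hl : l.Pairwise (· ≤ ·))
    (hnn : ∀ a ∈ l, 0 ≤ a) (h0 : l.count 0 = 1) (hlen : 2 ≤ l.length) :
    0 < l.getD 1 0 ∧ ∀ a ∈ l, a ≠ 0 → l.getD 1 0 ≤ a := by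
  obtain _ | ⟨a, _ | ⟨b, t⟩⟩ := l
  · simp at hlen
  · simp at hlen
  obtain ⟨hal, hbl, -⟩ : (∀ x ∈ b :: t, a ≤ x) ∧ (∀ x ∈ t, b ≤ x) ∧ _ := by
    simpa only [List.pairwise_cons, List.mem_cons, forall_eq_or_imp] using hl
  have ha : a = 0 := by
    have h0mem : (0 : ℝ) ∈ a :: b :: t := List.count_pos_iff.mp (by omega)
    rcases List.mem_cons.mp h0mem with h | h
    · exact h.symm
    · exact le_antisymm (hal 0 h) (hnn a List.mem_cons_self)
  subst ha
  have hb : b ≠ 0 := by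
    rintro rfl
    simp at h0
  refine ⟨(hnn b (by simp)).lt_of_ne' hb, fun x hx hx0 => ?_⟩
  simp only [List.mem_cons] at hx
  rcases hx with rfl | rfl | hx
  · exact absurd rfl hx0
  · exact le_rfl
  · exact hbl x hx

theorem Matrix.PosSemidef.secondSmallestEigenvalue_pos_and_le {n : Type*} [Fintype n]
    [DecidableEq n] {A : Matrix n n ℝ} (hA : A.PosSemidef) (hn : 2 ≤ Fintype.card n)
    (h0 : Fintype.card {i // hA.1.eigenvalues i = 0} = 1) :
    0 < secondSmallestEigenvalue A ∧
      ∀ i, hA.1.eigenvalues i ≠ 0 → secondSmallestEigenvalue A ≤ hA.1.eigenvalues i := by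
  set l := A.charpoly.roots.sort (· ≤ ·)
  have hl : (l : Multiset ℝ) = Finset.univ.val.map hA.1.eigenvalues := by
    simp [l, hA.1.roots_charpoly_eq_eigenvalues]
  have hmem : ∀ a, a ∈ l ↔ ∃ i, hA.1.eigenvalues i = a := fun a => by
    rw [← Multiset.mem_coe, hl]; simp
  obtain ⟨hpos, hle⟩ := List.getD_one_pos_and_le_of_pairwise (Multiset.pairwise_sort _ _)
    (l := l) (fun a ha => by obtain ⟨i, rfl⟩ := (hmem a).mp ha; exact hA.eigenvalues_nonneg i)
    (by
      rw [← Multiset.coe_count, hl, Multiset.count_map, ← Finset.filter_val, ← Finset.card_def]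
      simpa [Fintype.card_subtype, eq_comm] using h0)
    (by rw [← Multiset.coe_card, hl]; simpa using hn)
  exact ⟨hpos, fun i hi => hle _ ((hmem _).mpr ⟨i, rfl⟩) hi⟩

theorem Matrix.PosSemidef.nonneg_of_mulVec_eq_smul {n : Type*} [Fintype n] {M : Matrix n n ℝ}
    (hM : M.PosSemidef) {μ : ℝ} {v : n → ℝ} (hv : v ≠ 0) (h : M *ᵥ v = μ • v) : 0 ≤ μ := by
  have hvv : 0 < v ⬝ᵥ v := by simpa using dotProduct_self_star_pos_iff.mpr hv
  have := hM.dotProduct_mulVec_nonneg v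
  rw [star_trivial, h, dotProduct_smul, smul_eq_mul] at this
  exact nonneg_of_mul_nonneg_left this hvv

theorem IsSmallestEigenvalue.mul_dotProduct_self_le_dotProduct_mulVec {n : Type*} [Fintype n]
    [DecidableEq n] {M : Matrix n n ℝ} {lam : ℝ} (h : IsSmallestEigenvalue M lam)
    (hM : M.IsHermitian) (y : n → ℝ) : lam * (y ⬝ᵥ y) ≤ y ⬝ᵥ (M *ᵥ y) :=
  hM.mul_dotProduct_self_le_dotProduct_mulVec (fun k => h.2 _
    ⟨_, (WithLp.ofLp_eq_zero (p := 2)).not.mpr (hM.eigenvectorBasis.orthonormal.ne_zero k),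
      hM.mulVec_eigenvectorBasis k⟩) y

section Laplacian

variable {V : Type*} [Fintype V] [DecidableEq V] {G : SimpleGraph V}

theorem posSemidef_lapR (G : SimpleGraph V) : (lapR G).PosSemidef := by
  classical
  exact SimpleGraph.posSemidef_lapMatrix ℝ G

theorem lapR_mulVec_const (G : SimpleGraph V) (c : ℝ) : lapR G *ᵥ (fun _ => c) = 0 := by
  classical
  exact (SimpleGraph.lapMatrix_mulVec_eq_zero_iff_forall_reachable G).mpr fun _ _ _ => rfl

theorem lapR_mulVec_sub_const_of_mulVec_eq_smul {α : V → ℝ} {lam : ℝ} {x : V → ℝ}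
    (heig : (lapR G + diagonal α) *ᵥ x = lam • x) (c : ℝ) :
    lapR G *ᵥ (x - fun _ => c) = fun i => (lam - α i) * x i := by
  rw [mulVec_sub, lapR_mulVec_const, sub_zero,
    eq_sub_of_add_eq ((add_mulVec _ _ x).symm.trans heig)]
  funext i
  simp [mulVec_diagonal, sub_mul]

theorem SimpleGraph.Connected.card_eigenvalues_lapR_eq_zero_eq_one (hG : G.Connected)
    (hL : (lapR G).IsHermitian) : Fintype.card {i // hL.eigenvalues i = 0} = 1 := by
  classical
  rw [hL.card_eigenvalues_eq_zero_eq_finrank_ker, lapR,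
    ← card_connectedComponent_eq_finrank_ker_toLin'_lapMatrix, Fintype.card_eq_one_iff]
  obtain ⟨v⟩ := hG.nonempty
  exact ⟨G.connectedComponentMk v, fun _ => hG.preconnected.subsingleton_connectedComponent.elim _ _⟩

theorem SimpleGraph.Connected.dotProduct_eq_zero_of_lapR_mulVec_eq_zero (hG : G.Connected)
    {y z : V → ℝ} (hy : ∑ i, y i = 0) (hz : lapR G *ᵥ z = 0) : z ⬝ᵥ y = 0 := by
  classical
  obtain ⟨v⟩ := hG.nonempty
  have hconst : ∀ i, z i = z v := fun i =>
    (G.lapMatrix_mulVec_eq_zero_iff_forall_reachable.mp hz) i v (hG.preconnected i v)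
  simp [dotProduct, hconst, ← Finset.mul_sum, hy]

end Laplacian

theorem sum_sq_sub_mul_le_two_mul {ι : Type*} [Fintype ι] {s lam : ℝ} {α x : ι → ℝ}
    (hα0 : ∀ i, 0 ≤ α i) (hαs : ∀ i, α i ≤ s) (hlam : 0 ≤ lam)
    (hlamα : lam * Fintype.card ι ≤ ∑ i, α i) (hx : ∀ i, x i ^ 2 ≤ 1) :
    ∑ i, ((lam - α i) * x i) ^ 2 ≤ 2 * s * ∑ i, α i := by
  have hterm : ∀ i, ((lam - α i) * x i) ^ 2 ≤ lam ^ 2 + s * α i := fun i => by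
    have h1 : ((lam - α i) * x i) ^ 2 ≤ (lam - α i) ^ 2 := by
      rw [mul_pow]; exact mul_le_of_le_one_right (sq_nonneg _) (hx i)
    nlinarith [mul_nonneg hlam (hα0 i), mul_le_mul_of_nonneg_right (hαs i) (hα0 i)]
  have hα_nonneg : 0 ≤ ∑ i, α i := Finset.sum_nonneg fun i _ => hα0 i
  have hα_le : ∑ i, α i ≤ s * Fintype.card ι := by
    simpa [mul_comm] using Finset.sum_le_sum fun i (_ : i ∈ Finset.univ) => hαs i
  have hlam_sq : lam ^ 2 * Fintype.card ι ≤ s * ∑ i, α i := by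
    rcases (Nat.cast_nonneg (Fintype.card ι) : (0 : ℝ) ≤ _).eq_or_lt with hcard | hcard
    · rw [← hcard, mul_zero] at hα_le ⊢
      rw [le_antisymm hα_le hα_nonneg, mul_zero]
    have hlam_s : lam ≤ s := le_of_mul_le_mul_right (hlamα.trans hα_le) hcard
    nlinarith [mul_le_mul_of_nonneg_left hlamα hlam, mul_le_mul_of_nonneg_right hlam_s hα_nonneg]
  calc ∑ i, ((lam - α i) * x i) ^ 2 ≤ ∑ i, (lam ^ 2 + s * α i) :=
        Finset.sum_le_sum fun i _ => hterm i
    _ = lam ^ 2 * Fintype.card ι + s * ∑ i, α i := by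
      rw [Finset.sum_add_distrib, ← Finset.mul_sum]; simp [mul_comm]
    _ ≤ 2 * s * ∑ i, α i := by linarith

theorem eigenvector_projection_bound_general {m : ℕ} (hm : 2 ≤ m)
    (H : SimpleGraph (Fin m)) (hH : H.Connected)
    (s : ℕ) (α : Fin m → ℕ) (hα : ∀ i, α i ≤ s)
    (lam : ℝ)
    (hlam : IsSmallestEigenvalue (lapR H + Matrix.diagonal fun i => (α i : ℝ)) lam)
    (x : Fin m → ℝ)
    (heig : (lapR H + Matrix.diagonal fun i => (α i : ℝ)).mulVec x = lam • x)
    (hxnn : ∀ i, 0 ≤ x i) (hxle : ∀ i, x i ≤ 1) :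
    ∑ i, (x i - (∑ j, x j) / (m : ℝ)) ^ 2 ≤
      2 * (s : ℝ) * (∑ j, (α j : ℝ)) / (secondSmallestEigenvalue (lapR H)) ^ 2 := by
  set y : Fin m → ℝ := x - fun _ => (∑ j, x j) / (m : ℝ)
  have hL := posSemidef_lapR H
  have hM : (lapR H + diagonal fun i => (α i : ℝ)).PosSemidef :=
    hL.add (PosSemidef.diagonal fun i => Nat.cast_nonneg _)
  have hlam0 : 0 ≤ lam := by
    obtain ⟨v, hv, hMv⟩ := hlam.1
    exact hM.nonneg_of_mulVec_eq_smul hv hMv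
  have hlamα : lam * m ≤ ∑ j, (α j : ℝ) := by
    simpa [add_mulVec, mulVec_diagonal, lapR_mulVec_const, dotProduct] using
      hlam.mul_dotProduct_self_le_dotProduct_mulVec hM.1 (fun _ => 1)
  have hy_sum : ∑ i, y i = 0 := by
    simp [y, Finset.sum_sub_distrib, mul_div_cancel₀, Nat.cast_ne_zero.mpr (by omega : m ≠ 0)]
  obtain ⟨hlam₂_pos, hlam₂_le⟩ := hL.secondSmallestEigenvalue_pos_and_le (by simpa using hm)
    (hH.card_eigenvalues_lapR_eq_zero_eq_one _)
  have hspec := hL.1.sq_mul_dotProduct_self_le_mulVec_dotProduct_mulVec hlam₂_pos.le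
    (fun k hk => (hlam₂_le k hk).trans (le_abs_self _))
    (fun z hz => hH.dotProduct_eq_zero_of_lapR_mulVec_eq_zero hy_sum hz)
  rw [lapR_mulVec_sub_const_of_mulVec_eq_smul heig] at hspec
  have hres := sum_sq_sub_mul_le_two_mul (fun i => Nat.cast_nonneg (α i))
    (fun i => Nat.cast_le.mpr (hα i)) hlam0 (by simpa using hlamα)
    (fun i => pow_le_one₀ (hxnn i) (hxle i))
  simp only [y, dotProduct, Pi.sub_apply, ← sq] at hspec
  rw [le_div_iff₀ (by positivity)]
  linarith

/-- With the setup of Lemma 2 (connected `H` on `m ≥ 2` vertices, `Δ = diag(α)`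
with `0 ≤ αᵢ ≤ s`, `B = Σ αᵢ`, and `x` a nonnegative eigenvector of `L̄ + Δ` for its smallest
eigenvalue with largest component `1`), letting `γ` be the average of the components of `x`,
the squared Euclidean norm of `x - γ·𝟏` is at most `2sB/λ₂(L̄)²`. -/
theorem eigenvector_projection_bound {m : ℕ} (hm : 2 ≤ m)
    (H : SimpleGraph (Fin m)) (hH : H.Connected)
    (s : ℕ) (hs : 0 < s) (α : Fin m → ℕ) (hα : ∀ i, α i ≤ s)
    (lam : ℝ)
    (hlam : IsSmallestEigenvalue (lapR H + Matrix.diagonal fun i => (α i : ℝ)) lam)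
    (x : Fin m → ℝ) (hx0 : x ≠ 0)
    (heig : (lapR H + Matrix.diagonal fun i => (α i : ℝ)).mulVec x = lam • x)
    (hxnn : ∀ i, 0 ≤ x i) (hxle : ∀ i, x i ≤ 1) (hxmax : ∃ i, x i = 1) :
    ∑ i, (x i - (∑ j, x j) / (m : ℝ)) ^ 2 ≤
      2 * (s : ℝ) * (∑ j, (α j : ℝ)) / (secondSmallestEigenvalue (lapR H)) ^ 2 :=
  eigenvector_projection_bound_general hm H hH s α hα lam hlam x heig hxnn hxle
end
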